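/- Let Ω ⊆ ℂ be a measurable set with finite Lebesgue measure |Ω|. Then for every natural number n and every a ∈ ℂ, (πⁿ/n!) ∫_Ω |z − a|^{2n} e^{−π|z−a|²} dA(z) ≤ 1 − e^{−|Ω|}. (Equivalently, ∫_Ω |T_a(e_n)(z)|² dλ(z) ≤ 1 − e^{−|Ω|}, where e_n(z) = √(πⁿ/n!) zⁿ is the n-th normalized monomial and T_a is the Fock-space translation.) -/

import Mathlib

/-!
With `G u = uⁿ e^{-u} / n!`, the integrand is `G (π |z - a|²)`, and `z ↦ π |z|²` pushes Lebesgue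
measure on `ℂ` forward to Lebesgue measure on `(0, ∞)`. Since `log G` is concave, for `s = |Ω| > 0`
there is an interval `(α, α + s]` on which `G` is at least its value `t` at the endpoints and
outside of which it is at most `t`. The bathtub bound `∫_Ω g ≤ t |Ω| + ∫ (g - t)⁺` then gives
`∫_Ω g ≤ ∫_α^{α+s} G = P(α) - P(α + s)`, where `P u = e^{-u} ∑_{k ≤ n} uᵏ / k!` is the Poisson
distribution function; finally `P(α + s) ≥ e^{-s} P(α)` and `P(α) ≤ 1`.
-/

open MeasureTheory Real Set
open scoped Nat ENNReal

noncomputable def erlangDensity (n : ℕ) (u : ℝ) : ℝ := u ^ n * exp (-u) / n !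

noncomputable def poissonCDF (n : ℕ) (u : ℝ) : ℝ := ∑ k ∈ Finset.range (n + 1), erlangDensity k u

@[fun_prop]
lemma continuous_erlangDensity (n : ℕ) : Continuous (erlangDensity n) := by
  unfold erlangDensity; fun_prop

lemma erlangDensity_nonneg (n : ℕ) {u : ℝ} (hu : 0 ≤ u) : 0 ≤ erlangDensity n u := by
  unfold erlangDensity; positivity

lemma integrableOn_erlangDensity_Ioi (n : ℕ) : IntegrableOn (erlangDensity n) (Ioi 0) := by
  have := (GammaIntegral_convergent (s := n + 1) (by positivity)).div_const (n ! : ℝ)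
  simp only [add_sub_cancel_right, rpow_natCast] at this
  refine IntegrableOn.congr_fun this (fun u _ => ?_) measurableSet_Ioi
  simp only [erlangDensity, mul_comm]

lemma hasDerivAt_erlangDensity_zero (u : ℝ) :
    HasDerivAt (erlangDensity 0) (-erlangDensity 0 u) u := by
  have h : erlangDensity 0 = fun v => exp (-v) := by funext v; simp [erlangDensity]
  simpa [h] using (hasDerivAt_neg u).exp

lemma hasDerivAt_erlangDensity_succ (n : ℕ) (u : ℝ) :
    HasDerivAt (erlangDensity (n + 1)) (erlangDensity n u - erlangDensity (n + 1) u) u := by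
  have := (((hasDerivAt_pow (n + 1) u).mul (hasDerivAt_neg u).exp).div_const ((n + 1)! : ℝ))
  refine this.congr_deriv ?_
  simp only [erlangDensity, Nat.factorial_succ, add_tsub_cancel_right]
  push_cast
  field_simp
  ring

lemma hasDerivAt_poissonCDF (n : ℕ) (u : ℝ) :
    HasDerivAt (poissonCDF n) (-erlangDensity n u) u := by
  induction n with
  | zero =>
    have h : poissonCDF 0 = erlangDensity 0 := by funext v; simp [poissonCDF]
    simpa [h] using hasDerivAt_erlangDensity_zero u
  | succ n ih =>
    have hsplit : poissonCDF (n + 1) = poissonCDF n + erlangDensity (n + 1) := by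
      funext v; exact Finset.sum_range_succ _ _
    rw [hsplit]
    exact (ih.add (hasDerivAt_erlangDensity_succ n u)).congr_deriv (by ring)

lemma integral_erlangDensity (n : ℕ) (a b : ℝ) :
    ∫ u in a..b, erlangDensity n u = poissonCDF n a - poissonCDF n b := by
  rw [intervalIntegral.integral_eq_sub_of_hasDerivAt (f := fun u => - poissonCDF n u)
    (fun u _ => (hasDerivAt_poissonCDF n u).neg.congr_deriv (neg_neg _))
    ((continuous_erlangDensity n).intervalIntegrable a b)]
  ring

lemma poissonCDF_le_one (n : ℕ) {u : ℝ} (hu : 0 ≤ u) : poissonCDF n u ≤ 1 := by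
  have hsum : poissonCDF n u = exp (-u) * ∑ k ∈ Finset.range (n + 1), u ^ k / k ! := by
    simp only [poissonCDF, erlangDensity, Finset.mul_sum]
    exact Finset.sum_congr rfl fun k _ => by ring
  calc poissonCDF n u ≤ exp (-u) * exp u := by
        rw [hsum]; gcongr; exact sum_le_exp_of_nonneg hu _
    _ = 1 := by rw [← exp_add, neg_add_cancel, exp_zero]

lemma exp_neg_mul_poissonCDF_le (n : ℕ) {u s : ℝ} (hu : 0 ≤ u) (hs : 0 ≤ s) :
    exp (-s) * poissonCDF n u ≤ poissonCDF n (u + s) := by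
  rw [poissonCDF, poissonCDF, Finset.mul_sum]
  refine Finset.sum_le_sum fun k _ => ?_
  calc exp (-s) * erlangDensity k u = u ^ k * exp (-(u + s)) / k ! := by
        rw [erlangDensity, neg_add, exp_add]; ring
    _ ≤ erlangDensity k (u + s) := by unfold erlangDensity; gcongr; linarith

lemma integral_erlangDensity_le (n : ℕ) {α s : ℝ} (hα : 0 ≤ α) (hs : 0 ≤ s) :
    ∫ u in α..α + s, erlangDensity n u ≤ 1 - exp (-s) := by
  rw [integral_erlangDensity]
  nlinarith [exp_neg_mul_poissonCDF_le n hα hs, poissonCDF_le_one n hα,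
    exp_le_one_iff.2 (neg_nonpos.2 hs)]

lemma ConcaveOn.le_of_mem_Icc_of_eq {f : ℝ → ℝ} {S : Set ℝ} (hf : ConcaveOn ℝ S f) {a b u : ℝ}
    (ha : a ∈ S) (hb : b ∈ S) (hfab : f a = f b) (hu : u ∈ Icc a b) : f b ≤ f u := by
  simpa [hfab] using hf.ge_on_segment ha hb (by rwa [segment_eq_Icc (hu.1.trans hu.2)])

lemma ConcaveOn.le_of_notMem_Ioo_of_eq {f : ℝ → ℝ} {S : Set ℝ} (hf : ConcaveOn ℝ S f)
    {a b u : ℝ} (ha : a ∈ S) (hb : b ∈ S) (hab : a < b) (hfab : f a = f b) (hu : u ∈ S)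
    (hu' : u ∉ Ioo a b) : f u ≤ f b := by
  rcases le_or_gt u a with hua | hau
  · exact hfab ▸ hf.left_le_of_le_right'' hu hb hua hab hfab.le
  · have hbu : b ≤ u := not_lt.1 fun hub => hu' ⟨hau, hub⟩
    exact hf.right_le_of_le_left'' ha hu hab hbu hfab.ge

lemma erlangDensity_eq_exp (n : ℕ) {u : ℝ} (hu : 0 < u) :
    erlangDensity n u = exp (n * log u - u) / n ! := by
  rw [erlangDensity, exp_sub, exp_nat_mul, exp_log hu, exp_neg]
  ring

lemma concaveOn_mul_log_sub_id (n : ℕ) : ConcaveOn ℝ (Ioi 0) fun u => n * log u - u :=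
  (strictConcaveOn_log_Ioi.concaveOn.smul (Nat.cast_nonneg n)).sub (convexOn_id (convex_Ioi 0))

lemma exists_mul_log_sub_eq (n : ℕ) {s : ℝ} (hn : 0 < n) (hs : 0 < s) :
    ∃ α > 0, n * log α - α = n * log (α + s) - (α + s) := by
  -- the equation says `(α + s) / α = exp (s / n)`
  have hexp : 0 < exp (s / n) - 1 := by rw [sub_pos, one_lt_exp_iff]; positivity
  set α := s / (exp (s / n) - 1)
  have hα : 0 < α := div_pos hs hexp
  have hratio : (α + s) / α = exp (s / n) := by
    have : α * (exp (s / n) - 1) = s := div_mul_cancel₀ _ hexp.ne'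
    rw [div_eq_iff hα.ne']
    linarith
  have hlog : log (α + s) - log α = s / n := by
    rw [← log_div (by positivity) hα.ne', hratio, log_exp]
  refine ⟨α, hα, ?_⟩
  field_simp at hlog
  linarith

lemma exists_level_Ioc_erlangDensity (n : ℕ) {s : ℝ} (hs : 0 < s) :
    ∃ α, 0 ≤ α ∧ (∀ u ∈ Ioc α (α + s), erlangDensity n (α + s) ≤ erlangDensity n u) ∧
      ∀ u, 0 < u → u ∉ Ioc α (α + s) → erlangDensity n u ≤ erlangDensity n (α + s) := by
  rcases Nat.eq_zero_or_pos n with rfl | hn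
  · refine ⟨0, le_rfl, fun u hu => ?_, fun u hu hu' => ?_⟩ <;>
      simp only [erlangDensity, pow_zero, one_mul, Nat.factorial_zero, Nat.cast_one, div_one,
        zero_add, exp_le_exp, neg_le_neg_iff] at hu ⊢
    · exact hu.2
    · exact (not_le.1 fun hus => hu' ⟨hu, by rwa [zero_add]⟩).le
  obtain ⟨α, hα, hlevel⟩ := exists_mul_log_sub_eq n hn hs
  have hmono : ∀ u v, 0 < u → 0 < v → n * log u - u ≤ n * log v - v →
      erlangDensity n u ≤ erlangDensity n v := fun u v hu hv huv => by
    rwa [erlangDensity_eq_exp n hu, erlangDensity_eq_exp n hv,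
      div_le_div_iff_of_pos_right (by positivity), exp_le_exp]
  have hφ := concaveOn_mul_log_sub_id n
  have hβ : α + s ∈ Ioi 0 := by simp only [mem_Ioi]; linarith
  refine ⟨α, hα.le, fun u hu => ?_, fun u hu hu' => ?_⟩
  · exact hmono _ _ hβ (hα.trans hu.1)
      (hφ.le_of_mem_Icc_of_eq hα hβ hlevel (Ioc_subset_Icc_self hu))
  · exact hmono _ _ hu hβ
      (hφ.le_of_notMem_Ioo_of_eq hα hβ (by linarith) hlevel hu
        fun h => hu' (Ioo_subset_Ioc_self h))

lemma exists_threshold_erlangDensity (n : ℕ) {s : ℝ} (hs : 0 < s) :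
    ∃ t, 0 ≤ t ∧ t * s + ∫ u in Ioi 0, max (erlangDensity n u - t) 0 ≤ 1 - exp (-s) := by
  obtain ⟨α, hα, hin, hout⟩ := exists_level_Ioc_erlangDensity n hs
  set t := erlangDensity n (α + s)
  have hposPart : ∫ u in Ioi 0, max (erlangDensity n u - t) 0
      = (∫ u in α..α + s, erlangDensity n u) - s * t := by
    calc ∫ u in Ioi 0, max (erlangDensity n u - t) 0
        = ∫ u in Ioi 0, (Ioc α (α + s)).indicator (fun u => erlangDensity n u - t) u := by
          refine setIntegral_congr_fun measurableSet_Ioi fun u hu => ?_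
          by_cases hu' : u ∈ Ioc α (α + s)
          · rw [indicator_of_mem hu', max_eq_left (sub_nonneg.2 (hin u hu'))]
          · rw [indicator_of_notMem hu', max_eq_right (sub_nonpos.2 (hout u hu hu'))]
      _ = ∫ u in α..α + s, (erlangDensity n u - t) := by
          rw [setIntegral_indicator measurableSet_Ioc,
            intervalIntegral.integral_of_le (by linarith),
            inter_eq_self_of_subset_right (Ioc_subset_Ioi_self.trans (Ioi_subset_Ioi hα))]
      _ = (∫ u in α..α + s, erlangDensity n u) - s * t := by
          rw [intervalIntegral.integral_sub ((continuous_erlangDensity n).intervalIntegrable _ _)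
            intervalIntegrable_const, intervalIntegral.integral_const, smul_eq_mul,
            add_sub_cancel_left]
  refine ⟨t, erlangDensity_nonneg n (by linarith), ?_⟩
  rw [hposPart]
  linarith [integral_erlangDensity_le n hα hs.le]

lemma MeasureTheory.Measure.ext_of_Iic_of_ne_top (μ ν : Measure ℝ) (hμ : ∀ c, μ (Iic c) ≠ ∞)
    (h : ∀ c, μ (Iic c) = ν (Iic c)) : μ = ν := by
  refine Measure.ext_of_Ioc' μ ν (fun a b _ => ne_top_of_le_ne_top (hμ b) (measure_mono
    Ioc_subset_Iic_self)) fun a b hab => ?_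
  have hν : ν (Iic a) ≠ ∞ := h a ▸ hμ a
  rw [← Iic_sdiff_Iic, measure_sdiff (Iic_subset_Iic.2 hab.le) nullMeasurableSet_Iic (hμ a),
    measure_sdiff (Iic_subset_Iic.2 hab.le) nullMeasurableSet_Iic hν, h a, h b]

lemma volume_setOf_pi_mul_norm_sq_le (c : ℝ) :
    volume {z : ℂ | π * ‖z‖ ^ 2 ≤ c} = ENNReal.ofReal c := by
  rcases lt_or_ge c 0 with hc | hc
  · have : {z : ℂ | π * ‖z‖ ^ 2 ≤ c} = ∅ :=
      eq_empty_of_forall_notMem fun z (hz : π * ‖z‖ ^ 2 ≤ c) =>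
        absurd hz (not_le.2 (hc.trans_le (by positivity)))
    rw [this, measure_empty, ENNReal.ofReal_of_nonpos hc.le]
  have hball : {z : ℂ | π * ‖z‖ ^ 2 ≤ c} = Metric.closedBall 0 (√(c / π)) := by
    ext z
    change π * ‖z‖ ^ 2 ≤ c ↔ _
    rw [mem_closedBall_zero_iff, le_sqrt (norm_nonneg z) (by positivity),
      le_div_iff₀' pi_pos]
  rw [hball, Complex.volume_closedBall, ← ENNReal.ofReal_pow (sqrt_nonneg _),
    sq_sqrt (by positivity), ← ENNReal.ofReal_coe_nnreal, NNReal.coe_real_pi,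
    ← ENNReal.ofReal_mul (by positivity), div_mul_cancel₀ _ pi_pos.ne']

theorem map_pi_mul_norm_sq_volume :
    (volume : Measure ℂ).map (fun z => π * ‖z‖ ^ 2) = volume.restrict (Ioi 0) := by
  have hIic (c : ℝ) : volume.restrict (Ioi 0) (Iic c) = ENNReal.ofReal c := by
    rw [Measure.restrict_apply measurableSet_Iic, inter_comm, Ioi_inter_Iic, Real.volume_Ioc,
      sub_zero]
  refine (Measure.ext_of_Iic_of_ne_top _ _ (fun c => hIic c ▸ ENNReal.ofReal_ne_top)
    fun c => ?_).symm
  rw [hIic, Measure.map_apply (by fun_prop) measurableSet_Iic]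
  exact (volume_setOf_pi_mul_norm_sq_le c).symm

lemma setIntegral_le_mul_measureReal_add_integral_posPart {X : Type*} [MeasurableSpace X]
    {μ : Measure X} {f : X → ℝ} {Ω : Set X} (hΩ : μ Ω ≠ ∞) (hf : IntegrableOn f Ω μ)
    (t : ℝ) (hft : Integrable (fun x => max (f x - t) 0) μ) :
    ∫ x in Ω, f x ∂μ ≤ t * μ.real Ω + ∫ x, max (f x - t) 0 ∂μ := by
  have hconst : IntegrableOn (fun _ => t) Ω μ := integrableOn_const hΩ
  calc ∫ x in Ω, f x ∂μ ≤ ∫ x in Ω, (t + max (f x - t) 0) ∂μ :=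
        setIntegral_mono hf (hconst.add hft.integrableOn) fun x => by
          linarith [le_max_left (f x - t) 0]
    _ = t * μ.real Ω + ∫ x in Ω, max (f x - t) 0 ∂μ := by
        rw [integral_add hconst hft.integrableOn, setIntegral_const, smul_eq_mul, mul_comm]
    _ ≤ t * μ.real Ω + ∫ x, max (f x - t) 0 ∂μ :=
        (add_le_add_iff_left _).2 (setIntegral_le_integral hft
          (Filter.Eventually.of_forall fun x => le_max_right _ _))

theorem setIntegral_erlangDensity_pi_mul_norm_sq_le (n : ℕ) {Ω : Set ℂ} (hΩ : volume Ω ≠ ∞) :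
    ∫ z in Ω, erlangDensity n (π * ‖z‖ ^ 2) ≤ 1 - exp (-volume.real Ω) := by
  rcases (measureReal_nonneg (μ := volume) (s := Ω)).eq_or_lt with hs | hs
  · rw [Measure.restrict_eq_zero.2 ((measureReal_eq_zero_iff hΩ).1 hs.symm), ← hs]
    simp
  obtain ⟨t, ht0, ht⟩ := exists_threshold_erlangDensity n hs
  have hmap := map_pi_mul_norm_sq_volume
  have hρ : AEMeasurable (fun z : ℂ => π * ‖z‖ ^ 2) volume := by fun_prop
  have hint : Integrable (fun z : ℂ => erlangDensity n (π * ‖z‖ ^ 2)) := by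
    refine (integrable_map_measure (continuous_erlangDensity n).aestronglyMeasurable hρ).1 ?_
    exact hmap ▸ integrableOn_erlangDensity_Ioi n
  have hposPart : ∫ z : ℂ, max (erlangDensity n (π * ‖z‖ ^ 2) - t) 0
      = ∫ u in Ioi 0, max (erlangDensity n u - t) 0 := by
    rw [← hmap, integral_map hρ (by fun_prop)]
  have hposPartInt : Integrable fun z : ℂ => max (erlangDensity n (π * ‖z‖ ^ 2) - t) 0 := by
    refine hint.mono (by fun_prop) (ae_of_all _ fun z => ?_)
    have hG := erlangDensity_nonneg n (u := π * ‖z‖ ^ 2) (by positivity)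
    rw [norm_of_nonneg (le_max_right _ _), norm_of_nonneg hG]
    exact max_le (by linarith) hG
  calc ∫ z in Ω, erlangDensity n (π * ‖z‖ ^ 2)
      ≤ t * volume.real Ω + ∫ z, max (erlangDensity n (π * ‖z‖ ^ 2) - t) 0 :=
        setIntegral_le_mul_measureReal_add_integral_posPart hΩ hint.integrableOn t hposPartInt
    _ ≤ 1 - exp (-volume.real Ω) := hposPart ▸ ht

theorem translated_monomial_concentration_general
    (Ω : Set ℂ) (hfin : volume Ω ≠ ⊤)
    (n : ℕ) (a : ℂ) :
    (Real.pi ^ n / (n.factorial : ℝ)) *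
        ∫ z in Ω, ‖z - a‖ ^ (2 * n) * Real.exp (-Real.pi * ‖z - a‖ ^ 2)
      ≤ 1 - Real.exp (-(volume Ω).toReal) := by
  have hvol : volume ((· + a) ⁻¹' Ω) = volume Ω := measure_preimage_add_right volume a Ω
  have hcentered := setIntegral_erlangDensity_pi_mul_norm_sq_le n (hvol ▸ hfin)
  rw [measureReal_def, hvol] at hcentered
  refine le_of_eq_of_le ?_ hcentered
  rw [← integral_const_mul, ← (measurePreserving_add_right volume a).setIntegral_preimage_emb
    (measurableEmbedding_addRight a)]
  refine integral_congr_ae (Filter.Eventually.of_forall fun z => ?_)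
  simp only [add_sub_cancel_right, erlangDensity, mul_pow, pow_mul, neg_mul]
  ring

/-- For every measurable `Ω ⊆ ℂ` of finite Lebesgue measure, every `n ∈ ℕ` and `a ∈ ℂ`,
`(πⁿ/n!) ∫_Ω |z−a|^{2n} e^{−π|z−a|²} dA(z) ≤ 1 − e^{−|Ω|}`; that is,
`∫_Ω |T_a(e_n)|² dλ ≤ 1 − e^{−|Ω|}` for the translated normalized monomials. -/
theorem translated_monomial_concentration
    (Ω : Set ℂ) (hmeas : MeasurableSet Ω) (hfin : volume Ω ≠ ⊤)
    (n : ℕ) (a : ℂ) :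
    (Real.pi ^ n / (n.factorial : ℝ)) *
        ∫ z in Ω, ‖z - a‖ ^ (2 * n) * Real.exp (-Real.pi * ‖z - a‖ ^ 2)
      ≤ 1 - Real.exp (-(volume Ω).toReal) :=
  translated_monomial_concentration_general Ω hfin n a
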